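/- Let K_1,...,K_n be entrywise nonnegative N×N matrices and α ∈ [0,1]. Then r(S_α(K_1) + ··· + S_α(K_n)) ≤ r(K_1 + ··· + K_n), where r is the spectral radius and S_α(K)_{ij} = k_{ij}^α k_{ji}^{1−α}. -/

import Mathlib

/-- The spectral radius of a real matrix (largest modulus of a complex eigenvalue). -/
noncomputable def specRad {N : ℕ} (A : Matrix (Fin N) (Fin N) ℝ) : ℝ :=
  (spectralRadius ℂ (A.map (Complex.ofReal))).toReal

/-- The weighted geometric symmetrization `S_α(K)` with entries `k_{ij}^α k_{ji}^{1-α}`. -/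
noncomputable def wgs {N : ℕ} (α : ℝ) (K : Matrix (Fin N) (Fin N) ℝ) :
    Matrix (Fin N) (Fin N) ℝ :=
  Matrix.of fun i j => K i j ^ α * K j i ^ (1 - α)

/-!
Gelfand's formula `r(A) = lim ‖A ^ m‖ ^ (1 / m)` shows that `r(A) ≤ r(B)` as soon as every entry
of every power `A ^ m` is dominated in absolute value by some entry of `B ^ m`. For nonnegative
`A ≤ B` this is monotonicity of matrix powers. For `S_α`, Hölder's inequality gives both
`∑ S_α(K_i) ≤ S_α(∑ K_i)` and, by induction, `S_α(M) ^ m ≤ S_α(M ^ m)` entrywise, and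
`S_α(M ^ m)_{ij}` is a weighted geometric mean of `(M ^ m)_{ij}` and `(M ^ m)_{ji}`.
-/

open Finset Filter
open scoped NNReal ENNReal Topology

theorem Real.sum_rpow_mul_rpow_one_sub_le {ι : Type*} (s : Finset ι) {a b : ι → ℝ}
    (ha : ∀ i, 0 ≤ a i) (hb : ∀ i, 0 ≤ b i) {α : ℝ} (hα0 : 0 ≤ α) (hα1 : α ≤ 1) :
    ∑ i ∈ s, a i ^ α * b i ^ (1 - α) ≤ (∑ i ∈ s, a i) ^ α * (∑ i ∈ s, b i) ^ (1 - α) := by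
  rcases hα0.eq_or_lt with rfl | hα0
  · simp
  rcases hα1.eq_or_lt with rfl | hα1
  · simp
  have hα1' : 0 < 1 - α := sub_pos.mpr hα1
  have hpq : Real.HolderConjugate α⁻¹ (1 - α)⁻¹ :=
    Real.holderConjugate_iff.mpr ⟨(one_lt_inv₀ hα0).mpr hα1, by rw [inv_inv, inv_inv]; ring⟩
  simpa only [one_div, inv_inv, ← Real.rpow_mul (ha _), ← Real.rpow_mul (hb _),
    mul_inv_cancel₀ hα0.ne', mul_inv_cancel₀ hα1'.ne', Real.rpow_one] using
    Real.inner_le_Lp_mul_Lq_of_nonneg s hpq (f := fun i => a i ^ α)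
      (g := fun i => b i ^ (1 - α)) (fun i _ => Real.rpow_nonneg (ha i) _)
      (fun i _ => Real.rpow_nonneg (hb i) _)

theorem spectrum.spectralRadius_le_of_nnnorm_pow_le {A : Type*} [NormedRing A]
    [NormedAlgebra ℂ A] [CompleteSpace A] {a b : A} {c : ℝ≥0} (hc : c ≠ 0)
    (h : ∀ m : ℕ, ‖a ^ m‖₊ ≤ c * ‖b ^ m‖₊) : spectralRadius ℂ a ≤ spectralRadius ℂ b := by
  have hc_root : Tendsto (fun m : ℕ => ((c : ℝ≥0∞) ^ (1 / (m : ℝ)))) atTop (𝓝 1) := by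
    have := (tendsto_const_nhds (x := c)).nnrpow tendsto_one_div_atTop_nhds_zero_nat (Or.inl hc)
    simpa [ENNReal.coe_rpow_of_nonneg] using (ENNReal.tendsto_coe (f := atTop)).mpr this
  have hb := (ENNReal.Tendsto.mul hc_root (Or.inl one_ne_zero)
    (spectrum.pow_nnnorm_pow_one_div_tendsto_nhds_spectralRadius b) (Or.inr ENNReal.one_ne_top))
  rw [one_mul] at hb
  refine le_of_tendsto_of_tendsto' (spectrum.pow_nnnorm_pow_one_div_tendsto_nhds_spectralRadius a)
    hb fun m => ?_
  rw [← ENNReal.mul_rpow_of_nonneg _ _ (by positivity)]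
  gcongr
  exact_mod_cast h m

theorem Matrix.pow_apply_le_pow_apply {n R : Type*} [Fintype n] [DecidableEq n] [Semiring R]
    [PartialOrder R] [IsOrderedRing R] {A B : Matrix n n R} (hA : ∀ i j, 0 ≤ A i j)
    (hAB : ∀ i j, A i j ≤ B i j) (m : ℕ) :
    ∀ i j, (A ^ m) i j ≤ (B ^ m) i j := by
  have hB : ∀ i j, 0 ≤ B i j := fun i j => (hA i j).trans (hAB i j)
  induction m with
  | zero => exact fun i j => le_rfl
  | succ m ih =>
    intro i j
    simp only [pow_succ, mul_apply]
    exact sum_le_sum fun k _ => mul_le_mul (ih i k) (hAB k j) (hA k j) (pow_apply_nonneg hB m i k)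

section LinftyOpNorm

attribute [local instance] Matrix.linftyOpSeminormedAddCommGroup Matrix.linftyOpNormedRing
  Matrix.linftyOpNormedAlgebra

variable {m n α : Type*} [Fintype m] [Fintype n] [SeminormedAddCommGroup α]

theorem Matrix.nnnorm_apply_le_linfty_opNNNorm (X : Matrix m n α) (i : m) (j : n) :
    ‖X i j‖₊ ≤ ‖X‖₊ := by
  rw [linfty_opNNNorm_def]
  exact (single_le_sum (f := fun k => ‖X i k‖₊) (fun _ _ => zero_le) (mem_univ j)).trans
    (le_sup (f := fun i => ∑ k, ‖X i k‖₊) (mem_univ i))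

theorem Matrix.linfty_opNNNorm_le_card_mul {X : Matrix m n α} {d : ℝ≥0}
    (h : ∀ i j, ‖X i j‖₊ ≤ d) : ‖X‖₊ ≤ Fintype.card n * d := by
  rw [linfty_opNNNorm_def]
  refine Finset.sup_le fun i _ => ?_
  calc ∑ k, ‖X i k‖₊ ≤ ∑ _k : n, d := sum_le_sum fun k _ => h i k
    _ = Fintype.card n * d := by simp

theorem Matrix.spectralRadius_le_of_forall_pow_apply_le [DecidableEq n] [Nonempty n]
    {A B : Matrix n n ℂ} (h : ∀ m i j, ∃ k l, ‖(A ^ m) i j‖ ≤ ‖(B ^ m) k l‖) :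
    spectralRadius ℂ A ≤ spectralRadius ℂ B := by
  refine spectrum.spectralRadius_le_of_nnnorm_pow_le (c := Fintype.card n)
    (by exact_mod_cast Fintype.card_ne_zero) fun m => linfty_opNNNorm_le_card_mul fun i j => ?_
  obtain ⟨k, l, hkl⟩ := h m i j
  exact (show ‖(A ^ m) i j‖₊ ≤ ‖(B ^ m) k l‖₊ from hkl).trans
    (nnnorm_apply_le_linfty_opNNNorm _ k l)

variable {N : ℕ}

theorem specRad_le_of_forall_pow_apply_le {A B : Matrix (Fin N) (Fin N) ℝ}
    (h : ∀ m i j, ∃ k l, |(A ^ m) i j| ≤ |(B ^ m) k l|) : specRad A ≤ specRad B := by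
  rcases isEmpty_or_nonempty (Fin N) with hN | hN
  · rw [Subsingleton.elim A B]
  have map_pow_apply (X : Matrix (Fin N) (Fin N) ℝ) (m : ℕ) (i j : Fin N) :
      ‖(X.map Complex.ofReal ^ m) i j‖ = |(X ^ m) i j| := by
    rw [show X.map Complex.ofReal ^ m = (X ^ m).map Complex.ofReal from
      (map_pow Complex.ofRealHom.mapMatrix X m).symm]
    simp
  refine ENNReal.toReal_mono ?_ (Matrix.spectralRadius_le_of_forall_pow_apply_le fun m i j => ?_)
  · exact (spectrum.spectralRadius_le_nnnorm _).trans_lt ENNReal.coe_lt_top |>.ne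
  · simpa only [map_pow_apply] using h m i j

end LinftyOpNorm

section

variable {N : ℕ} {α : ℝ}

theorem wgs_apply_nonneg {K : Matrix (Fin N) (Fin N) ℝ} (hK : ∀ i j, 0 ≤ K i j) (i j : Fin N) :
    0 ≤ wgs α K i j :=
  mul_nonneg (Real.rpow_nonneg (hK i j) _) (Real.rpow_nonneg (hK j i) _)

theorem wgs_apply_le_max {K : Matrix (Fin N) (Fin N) ℝ} (hK : ∀ i j, 0 ≤ K i j)
    (hα0 : 0 ≤ α) (hα1 : α ≤ 1) (i j : Fin N) : wgs α K i j ≤ max (K i j) (K j i) := by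
  have hAMGM := Real.geom_mean_le_arith_mean2_weighted hα0 (sub_nonneg.mpr hα1) (hK i j) (hK j i)
    (add_sub_cancel α 1)
  have := le_max_left (K i j) (K j i)
  have := le_max_right (K i j) (K j i)
  exact hAMGM.trans (by nlinarith)

theorem sum_wgs_apply_le {ι : Type*} (s : Finset ι) {K : ι → Matrix (Fin N) (Fin N) ℝ}
    (hK : ∀ i x y, 0 ≤ K i x y) (hα0 : 0 ≤ α) (hα1 : α ≤ 1) (x y : Fin N) :
    (∑ i ∈ s, wgs α (K i)) x y ≤ wgs α (∑ i ∈ s, K i) x y := by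
  simpa only [Matrix.sum_apply, wgs, Matrix.of_apply] using
    Real.sum_rpow_mul_rpow_one_sub_le s (fun i => hK i x y) (fun i => hK i y x) hα0 hα1

theorem mul_wgs_apply_le {A B : Matrix (Fin N) (Fin N) ℝ} (hA : ∀ i j, 0 ≤ A i j)
    (hB : ∀ i j, 0 ≤ B i j) (hα0 : 0 ≤ α) (hα1 : α ≤ 1) (i j : Fin N) :
    (wgs α A * wgs α B) i j ≤ (A * B) i j ^ α * (B * A) j i ^ (1 - α) := by
  calc (wgs α A * wgs α B) i j
      = ∑ k, (A i k * B k j) ^ α * (B j k * A k i) ^ (1 - α) := by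
        simp only [Matrix.mul_apply, wgs, Matrix.of_apply, Real.mul_rpow (hA _ _) (hB _ _),
          Real.mul_rpow (hB _ _) (hA _ _)]
        exact sum_congr rfl fun k _ => by ring
    _ ≤ (A * B) i j ^ α * (B * A) j i ^ (1 - α) :=
        Real.sum_rpow_mul_rpow_one_sub_le _ (fun k => mul_nonneg (hA i k) (hB k j))
          (fun k => mul_nonneg (hB j k) (hA k i)) hα0 hα1

theorem wgs_pow_apply_le {M : Matrix (Fin N) (Fin N) ℝ} (hM : ∀ i j, 0 ≤ M i j)
    (hα0 : 0 ≤ α) (hα1 : α ≤ 1) (m : ℕ) (i j : Fin N) :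
    (wgs α M ^ m) i j ≤ wgs α (M ^ m) i j := by
  induction m generalizing i j with
  | zero =>
    by_cases hij : i = j
    · simp [hij, wgs]
    · rw [pow_zero, pow_zero, Matrix.one_apply_ne hij]
      exact wgs_apply_nonneg Matrix.zero_le_one_elem i j
  | succ m ih =>
    have hMm := Matrix.pow_apply_nonneg hM m
    calc (wgs α M ^ (m + 1)) i j
        ≤ (wgs α (M ^ m) * wgs α M) i j := by
          rw [pow_succ, Matrix.mul_apply, Matrix.mul_apply]
          exact sum_le_sum fun k _ => mul_le_mul_of_nonneg_right (ih i k) (wgs_apply_nonneg hM k j)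
      _ ≤ (M ^ m * M) i j ^ α * (M * M ^ m) j i ^ (1 - α) :=
          mul_wgs_apply_le hMm hM hα0 hα1 i j
      _ = wgs α (M ^ (m + 1)) i j := by rw [← pow_succ, ← pow_succ']; rfl

theorem specRad_le_of_le {A B : Matrix (Fin N) (Fin N) ℝ} (hA : ∀ i j, 0 ≤ A i j)
    (hAB : ∀ i j, A i j ≤ B i j) : specRad A ≤ specRad B := by
  refine specRad_le_of_forall_pow_apply_le fun m i j => ⟨i, j, ?_⟩
  have hAm := Matrix.pow_apply_nonneg hA m i j
  rw [abs_of_nonneg hAm, abs_of_nonneg (hAm.trans (Matrix.pow_apply_le_pow_apply hA hAB m i j))]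
  exact Matrix.pow_apply_le_pow_apply hA hAB m i j

theorem specRad_wgs_le {M : Matrix (Fin N) (Fin N) ℝ} (hM : ∀ i j, 0 ≤ M i j)
    (hα0 : 0 ≤ α) (hα1 : α ≤ 1) : specRad (wgs α M) ≤ specRad M := by
  refine specRad_le_of_forall_pow_apply_le fun m i j => ?_
  have hMm := Matrix.pow_apply_nonneg hM m
  have hSm := Matrix.pow_apply_nonneg (wgs_apply_nonneg (α := α) hM) m i j
  have hle := (wgs_pow_apply_le hM hα0 hα1 m i j).trans (wgs_apply_le_max hMm hα0 hα1 i j)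
  rcases le_total ((M ^ m) j i) ((M ^ m) i j) with h | h
  · exact ⟨i, j, by rwa [abs_of_nonneg hSm, abs_of_nonneg (hMm i j), ← max_eq_left h]⟩
  · exact ⟨j, i, by rwa [abs_of_nonneg hSm, abs_of_nonneg (hMm j i), ← max_eq_right h]⟩

end

/-- `r(S_α(K₁) + ⋯ + S_α(Kₙ)) ≤ r(K₁ + ⋯ + Kₙ)`. -/
theorem specRad_sum_wgs_le {N n : ℕ} (K : Fin n → Matrix (Fin N) (Fin N) ℝ)
    (hK : ∀ i x y, 0 ≤ K i x y) (α : ℝ) (hα0 : 0 ≤ α) (hα1 : α ≤ 1) :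
    specRad (∑ i, wgs α (K i)) ≤ specRad (∑ i, K i) := by
  have hsum : ∀ x y, 0 ≤ (∑ i, K i) x y := fun x y => by
    rw [Matrix.sum_apply]; exact sum_nonneg fun i _ => hK i x y
  have hsum_wgs : ∀ x y, 0 ≤ (∑ i, wgs α (K i)) x y := fun x y => by
    rw [Matrix.sum_apply]; exact sum_nonneg fun i _ => wgs_apply_nonneg (hK i) x y
  calc specRad (∑ i, wgs α (K i))
      ≤ specRad (wgs α (∑ i, K i)) :=
        specRad_le_of_le hsum_wgs (sum_wgs_apply_le univ hK hα0 hα1)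
    _ ≤ specRad (∑ i, K i) := specRad_wgs_le hsum hα0 hα1
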